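/- arXiv:1611.09984 — 2 statements merged into one kernel-verified Lean document; each statement's English description precedes it below -/
import Mathlib

section
/- A Metzler matrix A (all off-diagonal entries nonnegative) is Hurwitz (all eigenvalues have negative real part) if there exists a vector p with strictly positive entries such that A p < 0 componentwise. -/
/-!
Conjugating by the diagonal matrix `diag p` does not change the spectrum, and turns `A` into
the matrix with entries `A i j * p j / p i`. Since `A` is Metzler, the Gershgorin disc of row `i`
of that matrix has centre `A i i` and radius `(A p)_i / p i - A i i`, so its rightmost point is
`(A p)_i / p i < 0`: every eigenvalue lies in the open left half-plane.
-/

open Matrix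

/-- A real square matrix is Hurwitz if every complex eigenvalue has negative real part. -/
def IsHurwitz {n : ℕ} (A : Matrix (Fin n) (Fin n) ℝ) : Prop :=
  ∀ μ : ℂ, μ ∈ spectrum ℂ (A.map Complex.ofReal) → μ.re < 0

namespace Matrix

theorem exists_norm_sub_diag_mul_le_of_mem_spectrum {K n : Type*} [NormedField K] [Fintype n]
    [DecidableEq n] {A : Matrix n n K} {μ : K} (hμ : μ ∈ spectrum K A) {w : n → K}
    (hw : ∀ i, w i ≠ 0) :
    ∃ k, ‖μ - A k k‖ * ‖w k‖ ≤ ∑ j ∈ Finset.univ.erase k, ‖A k j‖ * ‖w j‖ := by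
  let u : (Matrix n n K)ˣ :=
    Units.map (diagonalRingHom n K) (Pi.isUnit_iff.mpr fun i => (hw i).isUnit).unit
  have hu : ((u⁻¹ : (Matrix n n K)ˣ) * A * u : Matrix n n K) =
      of fun i j => A i j * w j / w i := by
    ext i j
    simp [u, div_eq_inv_mul, mul_assoc]
  have hμ' : μ ∈ spectrum K (of fun i j => A i j * w j / w i) := by
    rwa [← hu, spectrum.units_conjugate']
  rw [← spectrum_toLin', ← Module.End.hasEigenvalue_iff_mem_spectrum] at hμ'
  obtain ⟨k, hk⟩ := eigenvalue_mem_ball hμ'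
  simp only [mem_closedBall_iff_norm, of_apply, mul_div_cancel_right₀ _ (hw k), norm_div,
    norm_mul, ← Finset.sum_div, le_div_iff₀ (norm_pos_iff.mpr (hw k))] at hk
  exact ⟨k, hk⟩

theorem exists_re_mul_le_mulVec_of_mem_spectrum {n : Type*} [Fintype n] [DecidableEq n]
    {A : Matrix n n ℝ} (hA : ∀ i j, i ≠ j → 0 ≤ A i j) {p : n → ℝ} (hp : ∀ i, 0 < p i)
    {μ : ℂ} (hμ : μ ∈ spectrum ℂ (A.map Complex.ofReal)) :
    ∃ k, μ.re * p k ≤ (A *ᵥ p) k := by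
  obtain ⟨k, hk⟩ := exists_norm_sub_diag_mul_le_of_mem_spectrum hμ (w := fun i => (p i : ℂ))
    fun i => Complex.ofReal_ne_zero.mpr (hp i).ne'
  have hrow : ∑ j ∈ Finset.univ.erase k, ‖A.map Complex.ofReal k j‖ * ‖(p j : ℂ)‖ =
      (A *ᵥ p) k - A k k * p k :=
    calc _ = ∑ j ∈ Finset.univ.erase k, A k j * p j :=
          Finset.sum_congr rfl fun j hj => by
            simp only [map_apply, Complex.norm_real, Real.norm_eq_abs, abs_of_pos (hp j),
              abs_of_nonneg (hA k j (Finset.ne_of_mem_erase hj).symm)]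
      _ = (A *ᵥ p) k - A k k * p k := Finset.sum_erase_eq_sub (Finset.mem_univ k)
  rw [hrow, map_apply, Complex.norm_real, Real.norm_eq_abs, abs_of_pos (hp k)] at hk
  have hre : μ.re - A k k ≤ ‖μ - A k k‖ := by
    simpa using Complex.re_le_norm (μ - A k k)
  refine ⟨k, ?_⟩
  calc μ.re * p k = (μ.re - A k k) * p k + A k k * p k := by ring
    _ ≤ ‖μ - A k k‖ * p k + A k k * p k := by gcongr; exact (hp k).le
    _ ≤ (A *ᵥ p) k := by linarith

end Matrix

theorem metzler_hurwitz_of_pos_vector (n : ℕ) (A : Matrix (Fin n) (Fin n) ℝ)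
    (hMetzler : ∀ i j, i ≠ j → 0 ≤ A i j)
    (p : Fin n → ℝ) (hp : ∀ i, 0 < p i) (hAp : ∀ i, A.mulVec p i < 0) :
    IsHurwitz A := by
  intro μ hμ
  obtain ⟨k, hk⟩ := exists_re_mul_le_mulVec_of_mem_spectrum hMetzler hp hμ
  exact neg_of_mul_neg_left (hk.trans_lt (hAp k)) (hp k).le
end

section
/- With A as in the path-graph example (diagonal r, subdiagonal 1, corner entry c ≥ 0 at position (1,n)) and u > r, the matrix A - uI is Hurwitz if and only if c < (u - r)ⁿ. -/
/-!
For `n ≥ 2` the corner entry lies off the diagonal, so `A - u • 1 = (r - u) • 1 + S` with `S` the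
weighted cyclic shift `(S v)₀ = c v_{n-1}`, `(S v)_{i+1} = v_i`. An eigenvector of `S` for `z` is
a multiple of the geometric vector `(z ^ (n - 1 - i))ᵢ`, which is an eigenvector exactly when
`z ^ n = c`; so the spectrum of `A - u • 1` is `r - u + {z | z ^ n = c}`. The real parts of the
`n`-th roots of `c ≥ 0` are bounded by their common modulus `c ^ (1 / n)`, itself a root, so the
spectrum lies in the open left half-plane iff `c ^ (1 / n) < u - r`, i.e. iff `c < (u - r) ^ n`.
-/

open Matrix

open scoped Pointwise

theorem Matrix.mem_spectrum_iff_exists_mulVec_eq_smul {ι K : Type*} [Fintype ι] [DecidableEq ι]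
    [Field K] (M : Matrix ι ι K) (μ : K) :
    μ ∈ spectrum K M ↔ ∃ v ≠ 0, M *ᵥ v = μ • v := by
  rw [← spectrum_toLin', ← Module.End.hasEigenvalue_iff_mem_spectrum,
    Module.End.hasEigenvalue_iff, Submodule.ne_bot_iff]
  simp only [Module.End.mem_eigenspace_iff, toLin'_apply, and_comm]

theorem Fin.eq_pow_mul_last_of_castSucc_eq_mul_succ {M : Type*} [Monoid M] {m : ℕ} {z : M}
    {v : Fin (m + 1) → M} (hv : ∀ i : Fin m, v i.castSucc = z * v i.succ) (i : Fin (m + 1)) :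
    v i = z ^ (m - i) * v (Fin.last m) := by
  induction i using Fin.reverseInduction with
  | last => simp
  | cast i ih =>
    rw [hv, ih, ← mul_assoc, ← pow_succ', Fin.val_succ, Fin.val_castSucc]
    congr 2
    omega

theorem Complex.forall_pow_eq_re_lt_iff {n : ℕ} (hn : n ≠ 0) {c a : ℝ} (hc : 0 ≤ c)
    (ha : 0 ≤ a) : (∀ w : ℂ, w ^ n = c → w.re < a) ↔ c < a ^ n := by
  constructor
  · intro h
    set z := c ^ (n⁻¹ : ℝ)
    have hz : z ^ n = c := Real.rpow_inv_natCast_pow hc hn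
    have hza : z < a := by simpa using h z (by exact_mod_cast hz)
    exact hz ▸ pow_lt_pow_left₀ hza (Real.rpow_nonneg hc _) hn
  · intro h w hw
    have hnorm : ‖w‖ ^ n = c := by
      rw [← norm_pow, hw, Complex.norm_real, Real.norm_of_nonneg hc]
    calc w.re ≤ ‖w‖ := Complex.re_le_norm w
      _ < a := lt_of_pow_lt_pow_left₀ n ha (hnorm ▸ h)

section WeightedCycle

variable {R : Type*}

def weightedCycle [Zero R] [One R] (n : ℕ) (γ : R) : Matrix (Fin n) (Fin n) R :=
  of fun i j => if (i : ℕ) = j + 1 then 1 else if (i : ℕ) = 0 ∧ (j : ℕ) = n - 1 then γ else 0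

theorem weightedCycle_mulVec_succ [NonAssocSemiring R] {m : ℕ} (γ : R) (v : Fin (m + 1) → R)
    (i : Fin m) : (weightedCycle (m + 1) γ *ᵥ v) i.succ = v i.castSucc := by
  rw [mulVec, dotProduct, Finset.sum_eq_single i.castSucc]
  · simp [weightedCycle]
  · intro j _ hj
    have hij : (i : ℕ) ≠ j := fun h => hj (Fin.ext h.symm)
    simp [weightedCycle, hij]
  · simp

theorem weightedCycle_mulVec_zero [NonAssocSemiring R] {m : ℕ} (γ : R) (v : Fin (m + 1) → R) :
    (weightedCycle (m + 1) γ *ᵥ v) 0 = γ * v (Fin.last m) := by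
  rw [mulVec, dotProduct, Finset.sum_eq_single (Fin.last m)]
  · simp [weightedCycle]
  · intro j _ hj
    have hjm : (j : ℕ) ≠ m := fun h => hj (Fin.ext h)
    simp [weightedCycle, hjm]
  · simp

theorem weightedCycle_mulVec_eq_smul_iff [CommSemiring R] {m : ℕ} (γ z : R)
    (v : Fin (m + 1) → R) :
    weightedCycle (m + 1) γ *ᵥ v = z • v ↔
      (∀ i : Fin m, v i.castSucc = z * v i.succ) ∧ γ * v (Fin.last m) = z * v 0 := by
  simp only [funext_iff, Fin.forall_fin_succ, Pi.smul_apply, smul_eq_mul,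
    weightedCycle_mulVec_zero, weightedCycle_mulVec_succ]
  exact and_comm

theorem exists_weightedCycle_mulVec_eq_smul_iff [CommRing R] [IsDomain R] {m : ℕ} (γ z : R) :
    (∃ v ≠ 0, weightedCycle (m + 1) γ *ᵥ v = z • v) ↔ z ^ (m + 1) = γ := by
  simp only [weightedCycle_mulVec_eq_smul_iff]
  constructor
  · rintro ⟨v, hv0, hshift, hwrap⟩
    have hv := Fin.eq_pow_mul_last_of_castSucc_eq_mul_succ hshift
    have hlast : v (Fin.last m) ≠ 0 := fun h => hv0 (funext fun i => by simp [hv i, h])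
    refine (mul_right_cancel₀ hlast ?_).symm
    rw [hwrap, hv 0, ← mul_assoc, ← pow_succ']
    simp
  · intro hz
    refine ⟨fun i => z ^ (m - i), fun h => by simpa using congrFun h (Fin.last m), ?_, ?_⟩
    · intro i
      simp only [Fin.val_castSucc, Fin.val_succ, ← pow_succ']
      congr 1
      omega
    · simp [← hz, pow_succ']

theorem spectrum_weightedCycle {K : Type*} [Field K] {n : ℕ} (hn : n ≠ 0) (γ : K) :
    spectrum K (weightedCycle n γ) = {z | z ^ n = γ} := by
  obtain ⟨m, rfl⟩ := Nat.exists_eq_succ_of_ne_zero hn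
  ext z
  rw [Matrix.mem_spectrum_iff_exists_mulVec_eq_smul, exists_weightedCycle_mulVec_eq_smul_iff]
  rfl

end WeightedCycle

theorem path_graph_hurwitz_iff (n : ℕ) (hn : 2 ≤ n) (r u c : ℝ) (hu : r < u) (hc : 0 ≤ c)
    (A : Matrix (Fin n) (Fin n) ℝ)
    (hA : A = Matrix.of fun i j : Fin n =>
      if (i : ℕ) = (j : ℕ) then r
      else if (i : ℕ) = (j : ℕ) + 1 then 1
      else if (i : ℕ) = 0 ∧ (j : ℕ) = n - 1 then c else 0) :
    IsHurwitz (A - u • (1 : Matrix (Fin n) (Fin n) ℝ)) ↔ c < (u - r) ^ n := by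
  have hdecomp : (A - u • (1 : Matrix (Fin n) (Fin n) ℝ)).map Complex.ofReal =
      algebraMap ℂ _ ((r - u : ℝ) : ℂ) + weightedCycle n (c : ℂ) := by
    ext i j
    simp only [hA, weightedCycle, Matrix.map_apply, Matrix.sub_apply, Matrix.smul_apply,
      Matrix.of_apply, Matrix.add_apply, Matrix.one_apply, algebraMap_matrix_apply, Fin.ext_iff]
    split_ifs <;> first | omega | simp
  have hspec : spectrum ℂ ((A - u • (1 : Matrix (Fin n) (Fin n) ℝ)).map Complex.ofReal) =
      (fun w => ((r - u : ℝ) : ℂ) + w) '' {w | w ^ n = (c : ℂ)} := by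
    rw [hdecomp, ← spectrum.singleton_add_eq, spectrum_weightedCycle (by omega), Set.singleton_add]
  simp only [IsHurwitz, hspec, Set.forall_mem_image, Set.mem_ofPred_eq, Complex.add_re,
    Complex.ofReal_re, ← lt_sub_iff_add_lt', zero_sub, neg_sub]
  exact Complex.forall_pow_eq_re_lt_iff (by omega) hc (sub_nonneg.2 hu.le)
end
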